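/- Let S be a continuous t-conorm on [0,1] with residuum ⊸ that is weaker than the Łukasiewicz t-conorm. Then the residuum ⊸ is 1-Lipschitz from ([0,1]², 𝐝) to ([0,1], d): for all x₁, x₂, y₁, y₂ ∈ [0,1], d(x₁ ⊸ x₂, y₁ ⊸ y₂) ≤ 𝐝((x₁,x₂),(y₁,y₂)). In particular ⊸ is (uniformly) continuous with respect to these metrics. -/
import Mathlib


open unitInterval

instance : Fact ((0:ℝ) ≤ 1) := ⟨zero_le_one⟩

/-- A continuous t-conorm on the unit interval `[0,1]`: continuous (w.r.t. the
Euclidean topology), commutative, associative, nondecreasing in each argument,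
with `0` as neutral element. -/
structure IsContTConorm (S : I → I → I) : Prop where
  continuous : Continuous fun p : I × I => S p.1 p.2
  comm : ∀ x y, S x y = S y x
  assoc : ∀ x y z, S (S x y) z = S x (S y z)
  mono : ∀ x₁ x₂ y₁ y₂, x₁ ≤ x₂ → y₁ ≤ y₂ → S x₁ y₁ ≤ S x₂ y₂
  zero_left : ∀ x, S 0 x = x

/-- The residuum of a t-conorm: `x ⊸ y = inf {z ∈ [0,1] : S(z,x) ≥ y}`. -/
noncomputable def resid (S : I → I → I) (x y : I) : I :=
  sInf {z : I | y ≤ S z x}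
/-- The distance induced by the residuum: `d(x,y) = max(x ⊸ y, y ⊸ x)`. -/
noncomputable def rdist (S : I → I → I) (x y : I) : I :=
  max (resid S x y) (resid S y x)

/-- `S` is weaker than the Łukasiewicz t-conorm `S_L(x,y) = min(x+y,1)`. -/
def WeakerThanLukasiewicz (S : I → I → I) : Prop :=
  ∀ x y : I, (S x y : ℝ) ≤ min ((x : ℝ) + (y : ℝ)) 1

/-- The induced distance on `[0,1]²`:
`𝐝((x₁,x₂),(y₁,y₂)) = S(d(x₁,y₁), d(x₂,y₂))`. -/
noncomputable def rdist2 (S : I → I → I) (p q : I × I) : I :=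
  S (rdist S p.1 q.1) (rdist S p.2 q.2)

/-- The infimum defining the residuum is attained: `y ≤ S (x ⊸ y) x`. -/
lemma le_S_resid (S : I → I → I) (hS : IsContTConorm S) (x y : I) :
    y ≤ S (resid S x y) x := by
  have hcont : Continuous fun z : I => S z x :=
    hS.continuous.comp (continuous_id.prodMk continuous_const)
  have hclosed : IsClosed {z : I | y ≤ S z x} := isClosed_Ici.preimage hcont
  have hne : ({z : I | y ≤ S z x}).Nonempty := by
    refine ⟨1, ?_⟩
    have : y = S y 0 := by rw [hS.comm, hS.zero_left]
    calc y = S y 0 := this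
      _ ≤ S 1 x := hS.mono _ _ _ _ le_one' nonneg'
  have := hclosed.csInf_mem hne (OrderBot.bddBelow _)
  exact this

/-- Adjunction, one direction: `y ≤ S z x → x ⊸ y ≤ z`. -/
lemma resid_le (S : I → I → I) {x y z : I} (h : y ≤ S z x) :
    resid S x y ≤ z := sInf_le h

/-- Adjunction, other direction. -/
lemma le_S_of_resid_le (S : I → I → I) (hS : IsContTConorm S) {x y z : I}
    (h : resid S x y ≤ z) : y ≤ S z x :=
  (le_S_resid S hS x y).trans (hS.mono _ _ _ _ h le_rfl)

lemma key (S : I → I → I) (hS : IsContTConorm S) (x₁ x₂ y₁ y₂ : I) :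
    resid S (resid S x₁ x₂) (resid S y₁ y₂) ≤
      S (rdist S x₁ y₁) (rdist S x₂ y₂) := by
  set a := resid S x₁ x₂ with ha
  set D₁ := rdist S x₁ y₁ with hD₁
  set D₂ := rdist S x₂ y₂ with hD₂
  -- suffices: resid S y₁ y₂ ≤ S (S D₁ D₂) a
  refine resid_le S ?_
  -- suffices: y₂ ≤ S (S (S D₁ D₂) a) y₁
  refine resid_le S ?_
  have h1 : y₂ ≤ S D₂ x₂ :=
    (le_S_resid S hS x₂ y₂).trans (hS.mono _ _ _ _ (le_max_left _ _) le_rfl)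
  have h2 : x₂ ≤ S a x₁ := le_S_resid S hS x₁ x₂
  have h3 : x₁ ≤ S D₁ y₁ :=
    (le_S_resid S hS y₁ x₁).trans (hS.mono _ _ _ _ (le_max_right _ _) le_rfl)
  calc y₂ ≤ S D₂ x₂ := h1
    _ ≤ S D₂ (S a x₁) := hS.mono _ _ _ _ le_rfl h2
    _ ≤ S D₂ (S a (S D₁ y₁)) := hS.mono _ _ _ _ le_rfl (hS.mono _ _ _ _ le_rfl h3)
    _ = S (S (S D₁ D₂) a) y₁ := by
        rw [← hS.assoc a D₁ y₁, ← hS.assoc D₂ (S a D₁) y₁, hS.comm a D₁,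
          ← hS.assoc D₂ D₁ a, hS.comm D₂ D₁]

/-- The residuum of a continuous t-conorm weaker than Łukasiewicz is 1-Lipschitz
from `([0,1]², 𝐝)` to `([0,1], d)`. -/
theorem resid_lipschitz (S : I → I → I) (hS : IsContTConorm S)
    (hweak : WeakerThanLukasiewicz S) :
    ∀ x₁ x₂ y₁ y₂ : I,
      rdist S (resid S x₁ x₂) (resid S y₁ y₂) ≤ rdist2 S (x₁, x₂) (y₁, y₂) := by
  intro x₁ x₂ y₁ y₂
  have hsymm : ∀ u v : I, rdist S u v = rdist S v u := fun u v => max_comm _ _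
  refine max_le ?_ ?_
  · exact key S hS x₁ x₂ y₁ y₂
  · have := key S hS y₁ y₂ x₁ x₂
    simpa [rdist2, hsymm y₁ x₁, hsymm y₂ x₂] using this
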